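/- Let h* be the unique minimizer of E_σ(h) := OT(hμ,σ) + (g/(2f²)) ∫_Ω h² dμ over probability densities on Ω, and for ε > 0 let h_ε be a minimizer over probability densities of E_{σ,ε}(h) := OT_ε(hμ,σ) + (g/(2f²)) ∫_Ω h² dμ. Then ‖h_ε − h*‖²_{L²(μ)} ≤ (2f²/g)·(OT_ε(h*μ, σ) − OT(h*μ, σ)). In particular, if OT_ε(h*μ,σ) − OT(h*μ,σ) ≤ C·ε·log(1/ε), then ‖h_ε − h*‖_{L²(μ)} ≤ √((2f²/g)·C·ε·log(1/ε)). -/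

import Mathlib

open MeasureTheory Classical

/-- The Kullback–Leibler divergence of `π` with respect to `η`: equal to
`∫ log(dπ/dη) dπ` when `π ≪ η` (and the log-likelihood ratio is `π`-integrable),
and `+∞` otherwise. -/
noncomputable def KLdiv {α : Type*} [MeasurableSpace α] (π η : Measure α) : ENNReal :=
  if π ≪ η ∧ Integrable (fun x => Real.log (π.rnDeriv η x).toReal) π then
    ENNReal.ofReal (∫ x, Real.log (π.rnDeriv η x).toReal ∂π)
  else ⊤

/-- The entropic optimal transport cost with quadratic cost `½‖x−y‖²` and regularisation
parameter `ε`: the infimum over couplings `π` of `ρ` and `ν` of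
`∫ ½‖x−y‖² dπ + ε·KL(π ‖ ρ⊗ν)`.  For `ε = 0` this is the usual quadratic optimal
transport cost `OT`. -/
noncomputable def OTeps (ε : ℝ)
    (ρ ν : Measure (EuclideanSpace ℝ (Fin 2))) : ENNReal :=
  ⨅ (π : Measure (EuclideanSpace ℝ (Fin 2) × EuclideanSpace ℝ (Fin 2)))
    (_ : IsProbabilityMeasure π) (_ : π.map Prod.fst = ρ) (_ : π.map Prod.snd = ν),
      (∫⁻ p, ENNReal.ofReal (‖p.1 - p.2‖ ^ 2 / 2) ∂π)
        + ENNReal.ofReal ε * KLdiv π (ρ.prod ν)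

/-- `h` is a probability density on `Ω`: a nonnegative function in `L²(μ)` with
`∫ h dμ = 1`. -/
def IsDensity (Ω : Set (EuclideanSpace ℝ (Fin 2)))
    (μ : Measure (EuclideanSpace ℝ (Fin 2))) (h : EuclideanSpace ℝ (Fin 2) → ℝ) : Prop :=
  MemLp h 2 μ ∧ (∀ x ∈ Ω, 0 ≤ h x) ∧ (∫ x, h x ∂μ) = 1

/-- The (entropy regularised, for `ε > 0`) energy
`E_{σ,ε}(h) := OT_ε(hμ, σ) + (g/(2f²)) ∫ h² dμ`;  `E_σ = E_{σ,0}`. -/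
noncomputable def Ese (μ : Measure (EuclideanSpace ℝ (Fin 2))) (f g ε : ℝ)
    (σ : Measure (EuclideanSpace ℝ (Fin 2))) (h : EuclideanSpace ℝ (Fin 2) → ℝ) : ℝ :=
  (OTeps ε (μ.withDensity fun x => ENNReal.ofReal (h x)) σ).toReal
    + g / (2 * f ^ 2) * ∫ x, h x ^ 2 ∂μ

/-!
Write `E_{σ,ε}(h) = G(h) + c‖h‖²` with `c = g/(2f²)`, `G(h) = OT_ε(hμ, σ)` and
`F(h) = OT(hμ, σ) ≤ G(h)`, where `F` is convex on densities. Minimality of `h*` along the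
segment towards `h_ε` gives the first-order condition `F(h_ε) - F(h*) + 2c⟨h*, h_ε - h*⟩ ≥ 0`,
and minimality of `h_ε` tested against `h*` gives `G(h_ε) + c‖h_ε‖² ≤ G(h*) + c‖h*‖²`.
Adding the two and using `F(h_ε) ≤ G(h_ε)` leaves `c‖h_ε - h*‖² ≤ G(h*) - F(h*)`.
The compact supports make every transport cost finite, so all of this can be done in `ℝ`.
-/

open Filter Topology

local notation "ℝ²" => EuclideanSpace ℝ (Fin 2)

lemma KLdiv_self {α : Type*} [MeasurableSpace α] (η : Measure α) [SigmaFinite η] :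
    KLdiv η η = 0 := by
  have hlog : (fun x => Real.log (η.rnDeriv η x).toReal) =ᵐ[η] fun _ => 0 := by
    filter_upwards [Measure.rnDeriv_self η] with x hx
    simp [hx]
  rw [KLdiv, if_pos ⟨Measure.AbsolutelyContinuous.rfl, (integrable_zero _ _ _).congr hlog.symm⟩,
    integral_congr_ae hlog, integral_zero, ENNReal.ofReal_zero]

lemma lintegral_sqDist_prod_lt_top {E : Type*} [NormedAddCommGroup E] [MeasurableSpace E]
    {ρ ν : Measure E} [IsFiniteMeasure ρ] [IsFiniteMeasure ν] {S K : Set E}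
    (hS : Bornology.IsBounded S) (hK : Bornology.IsBounded K) (hρ : ρ Sᶜ = 0) (hν : ν Kᶜ = 0) :
    ∫⁻ p, ENNReal.ofReal (‖p.1 - p.2‖ ^ 2 / 2) ∂(ρ.prod ν) < ⊤ := by
  obtain ⟨R, hR⟩ := (hS.union hK).exists_norm_le
  have hbound : ∀ᵐ p ∂(ρ.prod ν),
      ENNReal.ofReal (‖p.1 - p.2‖ ^ 2 / 2) ≤ ENNReal.ofReal ((R + R) ^ 2 / 2) := by
    filter_upwards [Measure.quasiMeasurePreserving_fst.ae (measure_eq_zero_iff_ae_notMem.mp hρ),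
      Measure.quasiMeasurePreserving_snd.ae (measure_eq_zero_iff_ae_notMem.mp hν)]
      with p h₁ h₂
    have hdist : ‖p.1 - p.2‖ ≤ R + R := (norm_sub_le _ _).trans <|
      add_le_add (hR _ (.inl (by simpa using h₁))) (hR _ (.inr (by simpa using h₂)))
    gcongr
  refine (lintegral_mono_ae hbound).trans_lt ?_
  rw [lintegral_const]
  exact ENNReal.mul_lt_top ENNReal.ofReal_lt_top (measure_lt_top _ _)

lemma OTeps_le_of_coupling (ε : ℝ) {ρ ν : Measure ℝ²} (π : Measure (ℝ² × ℝ²))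
    [IsProbabilityMeasure π] (h₁ : π.map Prod.fst = ρ) (h₂ : π.map Prod.snd = ν) :
    OTeps ε ρ ν ≤ (∫⁻ p, ENNReal.ofReal (‖p.1 - p.2‖ ^ 2 / 2) ∂π)
      + ENNReal.ofReal ε * KLdiv π (ρ.prod ν) :=
  iInf_le_of_le π <| iInf_le_of_le inferInstance <| iInf_le_of_le h₁ <| iInf_le _ h₂

lemma OTeps_le_lintegral_prod (ε : ℝ) (ρ ν : Measure ℝ²)
    [IsProbabilityMeasure ρ] [IsProbabilityMeasure ν] :
    OTeps ε ρ ν ≤ ∫⁻ p, ENNReal.ofReal (‖p.1 - p.2‖ ^ 2 / 2) ∂(ρ.prod ν) := by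
  simpa [KLdiv_self] using OTeps_le_of_coupling ε (ρ.prod ν) Measure.fst_prod Measure.snd_prod

lemma OTeps_zero_eq (ρ ν : Measure ℝ²) :
    OTeps 0 ρ ν = ⨅ (π : Measure (ℝ² × ℝ²)) (_ : IsProbabilityMeasure π)
      (_ : π.map Prod.fst = ρ) (_ : π.map Prod.snd = ν),
        ∫⁻ p, ENNReal.ofReal (‖p.1 - p.2‖ ^ 2 / 2) ∂π := by
  simp [OTeps]

lemma OTeps_zero_le (ε : ℝ) (ρ ν : Measure ℝ²) : OTeps 0 ρ ν ≤ OTeps ε ρ ν := by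
  rw [OTeps_zero_eq, OTeps]
  exact iInf_mono fun π => iInf_mono fun _ => iInf_mono fun _ => iInf_mono fun _ =>
    le_self_add

lemma exists_coupling_lintegral_lt {ρ ν : Measure ℝ²} (hfin : OTeps 0 ρ ν ≠ ⊤)
    {δ : ENNReal} (hδ : δ ≠ 0) :
    ∃ π : Measure (ℝ² × ℝ²), IsProbabilityMeasure π ∧ π.map Prod.fst = ρ ∧
      π.map Prod.snd = ν ∧
        ∫⁻ p, ENNReal.ofReal (‖p.1 - p.2‖ ^ 2 / 2) ∂π < OTeps 0 ρ ν + δ := by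
  have hlt := ENNReal.lt_add_right hfin hδ
  conv_lhs at hlt => rw [OTeps_zero_eq]
  simpa only [iInf_lt_iff, exists_prop] using hlt

/-- Mixing near-optimal couplings of `ρ₀` and `ρ₁` with `ν` gives a coupling of the mixture
with `ν`. -/
lemma OTeps_zero_smul_add_smul_le {ρ₀ ρ₁ : Measure ℝ²} (ν : Measure ℝ²)
    (h₀ : OTeps 0 ρ₀ ν ≠ ⊤) (h₁ : OTeps 0 ρ₁ ν ≠ ⊤) {a b : ENNReal} (hab : a + b = 1) :
    OTeps 0 (a • ρ₀ + b • ρ₁) ν ≤ a * OTeps 0 ρ₀ ν + b * OTeps 0 ρ₁ ν := by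
  refine ENNReal.le_of_forall_pos_le_add fun δ hδ _ => ?_
  have hδ' : (δ : ENNReal) ≠ 0 := by exact_mod_cast hδ.ne'
  obtain ⟨π₀, _, hπ₀₁, hπ₀₂, hπ₀⟩ := exists_coupling_lintegral_lt h₀ hδ'
  obtain ⟨π₁, _, hπ₁₁, hπ₁₂, hπ₁⟩ := exists_coupling_lintegral_lt h₁ hδ'
  have : IsProbabilityMeasure (a • π₀ + b • π₁) := ⟨by simp [hab]⟩
  calc OTeps 0 (a • ρ₀ + b • ρ₁) ν
      ≤ ∫⁻ p, ENNReal.ofReal (‖p.1 - p.2‖ ^ 2 / 2) ∂(a • π₀ + b • π₁) := by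
        simpa using OTeps_le_of_coupling 0 (a • π₀ + b • π₁)
          (by rw [Measure.map_add _ _ measurable_fst, Measure.map_smul, Measure.map_smul,
            hπ₀₁, hπ₁₁])
          (by rw [Measure.map_add _ _ measurable_snd, Measure.map_smul, Measure.map_smul,
            hπ₀₂, hπ₁₂, ← add_smul, hab, one_smul])
    _ ≤ a * (OTeps 0 ρ₀ ν + δ) + b * (OTeps 0 ρ₁ ν + δ) := by
        rw [lintegral_add_measure, lintegral_smul_measure, lintegral_smul_measure]
        exact add_le_add (mul_le_mul_right hπ₀.le a) (mul_le_mul_right hπ₁.le b)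
    _ = a * OTeps 0 ρ₀ ν + b * OTeps 0 ρ₁ ν + δ := by
        rw [mul_add, mul_add, add_add_add_comm, ← add_mul, hab, one_mul]

lemma withDensity_ofReal_mul_add_mul {α : Type*} [MeasurableSpace α] {μ : Measure α}
    {h₀ h₁ : α → ℝ} (hm : AEMeasurable h₀ μ) (h₀_nonneg : 0 ≤ᵐ[μ] h₀)
    (h₁_nonneg : 0 ≤ᵐ[μ] h₁) {a b : ℝ} (ha : 0 ≤ a) (hb : 0 ≤ b) :
    μ.withDensity (fun x => ENNReal.ofReal (a * h₀ x + b * h₁ x)) =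
      ENNReal.ofReal a • μ.withDensity (fun x => ENNReal.ofReal (h₀ x))
        + ENNReal.ofReal b • μ.withDensity (fun x => ENNReal.ofReal (h₁ x)) := by
  have hm' : AEMeasurable (fun x => ENNReal.ofReal (h₀ x)) μ :=
    ENNReal.measurable_ofReal.comp_aemeasurable hm
  have hsplit : (fun x => ENNReal.ofReal (a * h₀ x + b * h₁ x)) =ᵐ[μ]
      ENNReal.ofReal a • hm'.mk _ + ENNReal.ofReal b • fun x => ENNReal.ofReal (h₁ x) := by
    filter_upwards [h₀_nonneg, h₁_nonneg, hm'.ae_eq_mk] with x hx₀ hx₁ hx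
    simp only [Pi.add_apply, Pi.smul_apply, smul_eq_mul, ← hx]
    rw [ENNReal.ofReal_add (mul_nonneg ha hx₀) (mul_nonneg hb hx₁), ENNReal.ofReal_mul ha,
      ENNReal.ofReal_mul hb]
  rw [withDensity_congr_ae hsplit, withDensity_add_left (hm'.measurable_mk.const_smul _),
    withDensity_smul' _ _ ENNReal.ofReal_ne_top, withDensity_smul' _ _ ENNReal.ofReal_ne_top,
    withDensity_congr_ae hm'.ae_eq_mk.symm]

section Density

variable {Ω : Set ℝ²} {μ : Measure ℝ²}

lemma IsDensity.ae_nonneg (hΩ : μ Ωᶜ = 0) {h : ℝ² → ℝ} (hD : IsDensity Ω μ h) :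
    0 ≤ᵐ[μ] h := by
  filter_upwards [measure_eq_zero_iff_ae_notMem.mp hΩ] with x hx
  exact hD.2.1 x (by simpa using hx)

variable [IsFiniteMeasure μ]

lemma IsDensity.integrable {h : ℝ² → ℝ} (hD : IsDensity Ω μ h) : Integrable h μ :=
  hD.1.integrable one_le_two

lemma IsDensity.isProbabilityMeasure_withDensity (hΩ : μ Ωᶜ = 0) {h : ℝ² → ℝ}
    (hD : IsDensity Ω μ h) :
    IsProbabilityMeasure (μ.withDensity fun x => ENNReal.ofReal (h x)) := by
  constructor
  rw [withDensity_apply _ MeasurableSet.univ, Measure.restrict_univ,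
    ← ofReal_integral_eq_lintegral_ofReal hD.integrable (hD.ae_nonneg hΩ), hD.2.2,
    ENNReal.ofReal_one]

lemma convex_setOf_isDensity : Convex ℝ {h | IsDensity Ω μ h} := by
  intro h₀ hD₀ h₁ hD₁ a b ha hb hab
  refine ⟨(hD₀.1.const_smul a).add (hD₁.1.const_smul b), fun x hx => ?_, ?_⟩
  · have := hD₀.2.1 x hx
    have := hD₁.2.1 x hx
    simp only [Pi.add_apply, Pi.smul_apply, smul_eq_mul]
    positivity
  · simp only [Pi.add_apply, Pi.smul_apply, smul_eq_mul]
    rw [integral_add (hD₀.integrable.const_mul a) (hD₁.integrable.const_mul b),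
      integral_const_mul, integral_const_mul, hD₀.2.2, hD₁.2.2, mul_one, mul_one, hab]

lemma OTeps_withDensity_ne_top (hΩ : Bornology.IsBounded Ω) (hμΩ : μ Ωᶜ = 0)
    {σ : Measure ℝ²} [IsProbabilityMeasure σ] {K : Set ℝ²} (hK : Bornology.IsBounded K)
    (hσK : σ Kᶜ = 0) (ε : ℝ) {h : ℝ² → ℝ} (hD : IsDensity Ω μ h) :
    OTeps ε (μ.withDensity fun x => ENNReal.ofReal (h x)) σ ≠ ⊤ := by
  have := hD.isProbabilityMeasure_withDensity hμΩ
  exact ne_top_of_le_ne_top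
    (lintegral_sqDist_prod_lt_top hΩ hK (withDensity_absolutelyContinuous μ _ hμΩ) hσK).ne
    (OTeps_le_lintegral_prod ε _ σ)

lemma convexOn_toReal_OTeps_zero_withDensity (hμΩ : μ Ωᶜ = 0) (σ : Measure ℝ²)
    (hfin : ∀ h, IsDensity Ω μ h → OTeps 0 (μ.withDensity fun x => ENNReal.ofReal (h x)) σ ≠ ⊤) :
    ConvexOn ℝ {h | IsDensity Ω μ h}
      (fun h => (OTeps 0 (μ.withDensity fun x => ENNReal.ofReal (h x)) σ).toReal) := by
  refine ⟨convex_setOf_isDensity, fun h₀ hD₀ h₁ hD₁ a b ha hb hab => ?_⟩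
  show (OTeps 0 (μ.withDensity fun x => ENNReal.ofReal (a * h₀ x + b * h₁ x)) σ).toReal ≤
    a * (OTeps 0 (μ.withDensity fun x => ENNReal.ofReal (h₀ x)) σ).toReal
      + b * (OTeps 0 (μ.withDensity fun x => ENNReal.ofReal (h₁ x)) σ).toReal
  have hmix := withDensity_ofReal_mul_add_mul hD₀.1.aestronglyMeasurable.aemeasurable
    (hD₀.ae_nonneg hμΩ) (hD₁.ae_nonneg hμΩ) ha hb
  have hab' : ENNReal.ofReal a + ENNReal.ofReal b = 1 := by
    rw [← ENNReal.ofReal_add ha hb, hab, ENNReal.ofReal_one]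
  have hconv := OTeps_zero_smul_add_smul_le σ (hfin h₀ hD₀) (hfin h₁ hD₁) hab'
  rw [← hmix] at hconv
  have hfin₀ := ENNReal.mul_ne_top (ENNReal.ofReal_ne_top (r := a)) (hfin h₀ hD₀)
  have hfin₁ := ENNReal.mul_ne_top (ENNReal.ofReal_ne_top (r := b)) (hfin h₁ hD₁)
  have := ENNReal.toReal_mono (ENNReal.add_ne_top.mpr ⟨hfin₀, hfin₁⟩) hconv
  rwa [ENNReal.toReal_add hfin₀ hfin₁, ENNReal.toReal_mul, ENNReal.toReal_mul,
    ENNReal.toReal_ofReal ha, ENNReal.toReal_ofReal hb] at this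

end Density

section Stability

variable {α : Type*} [MeasurableSpace α] {μ : Measure α}

lemma integral_add_mul_sq {u v : α → ℝ} (hu : MemLp u 2 μ) (hv : MemLp v 2 μ) (t : ℝ) :
    ∫ x, (u x + t * v x) ^ 2 ∂μ =
      ∫ x, u x ^ 2 ∂μ + 2 * t * ∫ x, u x * v x ∂μ + t ^ 2 * ∫ x, v x ^ 2 ∂μ := by
  have huv : Integrable (fun x => u x * v x) μ := hu.integrable_mul hv
  calc ∫ x, (u x + t * v x) ^ 2 ∂μ
      = ∫ x, (u x ^ 2 + 2 * t * (u x * v x)) + t ^ 2 * v x ^ 2 ∂μ :=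
        integral_congr_ae (ae_of_all _ fun x => by ring)
    _ = _ := by
        rw [integral_add (f := fun x => u x ^ 2 + 2 * t * (u x * v x)) (hu.integrable_sq.add (huv.const_mul _)) (hv.integrable_sq.const_mul _),
          integral_add hu.integrable_sq (huv.const_mul _), integral_const_mul,
          integral_const_mul]

lemma nonneg_of_forall_nonneg_add_mul {X Y : ℝ} (h : ∀ t ∈ Set.Ioc (0 : ℝ) 1, 0 ≤ X + t * Y) :
    0 ≤ X := by
  have hlim : Tendsto (fun t => X + t * Y) (𝓝[>] 0) (𝓝 X) := by
    have : Tendsto (fun t : ℝ => X + t * Y) (𝓝 0) (𝓝 (X + 0 * Y)) :=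
      tendsto_const_nhds.add (tendsto_id.mul_const Y)
    simpa using this.mono_left nhdsWithin_le_nhds
  exact ge_of_tendsto hlim (eventually_of_mem (Ioc_mem_nhdsGT one_pos) h)

theorem mul_integral_sub_sq_le_of_isMinOn {S : Set (α → ℝ)} {F G : (α → ℝ) → ℝ}
    (hF : ConvexOn ℝ S F) (hS : ∀ h ∈ S, MemLp h 2 μ) (c : ℝ) {h₀ h₁ : α → ℝ}
    (h₀S : h₀ ∈ S) (h₁S : h₁ ∈ S)
    (hmin₀ : IsMinOn (fun h => F h + c * ∫ x, h x ^ 2 ∂μ) S h₀)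
    (hmin₁ : IsMinOn (fun h => G h + c * ∫ x, h x ^ 2 ∂μ) S h₁) (hFG : F h₁ ≤ G h₁) :
    c * ∫ x, (h₁ x - h₀ x) ^ 2 ∂μ ≤ G h₀ - F h₀ := by
  set I := ∫ x, h₀ x * (h₁ x - h₀ x) ∂μ
  set D := ∫ x, (h₁ x - h₀ x) ^ 2 ∂μ
  have hsq : ∀ t : ℝ, ∫ x, ((1 - t) • h₀ + t • h₁) x ^ 2 ∂μ =
      ∫ x, h₀ x ^ 2 ∂μ + 2 * t * I + t ^ 2 * D := fun t => by
    rw [← integral_add_mul_sq (v := fun x => h₁ x - h₀ x) (hS h₀ h₀S) ((hS h₁ h₁S).sub (hS h₀ h₀S)) t]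
    refine integral_congr_ae (ae_of_all _ fun x => ?_)
    simp only [Pi.add_apply, Pi.smul_apply, smul_eq_mul]
    ring
  have hfirst : 0 ≤ F h₁ - F h₀ + 2 * c * I := by
    refine nonneg_of_forall_nonneg_add_mul (Y := c * D) fun t ⟨ht₀, ht₁⟩ => ?_
    have hmem := hF.1 h₀S h₁S (sub_nonneg.mpr ht₁) ht₀.le (sub_add_cancel 1 t)
    have hopt := isMinOn_iff.mp hmin₀ _ hmem
    have hconv := hF.2 h₀S h₁S (sub_nonneg.mpr ht₁) ht₀.le (sub_add_cancel 1 t)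
    simp only [hsq, smul_eq_mul] at hopt hconv
    refine (mul_nonneg_iff_of_pos_left ht₀).mp ?_
    nlinarith
  have hsecond := isMinOn_iff.mp hmin₁ h₀ h₀S
  have h₁sq : ∫ x, h₁ x ^ 2 ∂μ = ∫ x, h₀ x ^ 2 ∂μ + 2 * I + D := by
    simpa using hsq 1
  simp only [h₁sq] at hsecond
  linarith

end Stability

theorem stmt_14_general
    (Ω : Set (EuclideanSpace ℝ (Fin 2)))
    (hΩcpt : IsCompact Ω)
    (μ : Measure (EuclideanSpace ℝ (Fin 2)))
    (hμ : μ = (volume Ω)⁻¹ • volume.restrict Ω)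
    (f g : ℝ) (hf : 0 < f) (hg : 0 < g)
    (σ : Measure (EuclideanSpace ℝ (Fin 2))) [IsProbabilityMeasure σ]
    (hσ : ∃ K, IsCompact K ∧ σ Kᶜ = 0)
    (hstar : EuclideanSpace ℝ (Fin 2) → ℝ) (hstarD : IsDensity Ω μ hstar)
    (hstarMin : ∀ h, IsDensity Ω μ h → Ese μ f g 0 σ hstar ≤ Ese μ f g 0 σ h)
    (ε : ℝ)
    (heps : EuclideanSpace ℝ (Fin 2) → ℝ) (hepsD : IsDensity Ω μ heps)
    (hepsMin : ∀ h, IsDensity Ω μ h → Ese μ f g ε σ heps ≤ Ese μ f g ε σ h) :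
    (∫ x, (heps x - hstar x) ^ 2 ∂μ) ≤
      2 * f ^ 2 / g *
        ((OTeps ε (μ.withDensity fun x => ENNReal.ofReal (hstar x)) σ).toReal
          - (OTeps 0 (μ.withDensity fun x => ENNReal.ofReal (hstar x)) σ).toReal) ∧
    ∀ C : ℝ,
      (OTeps ε (μ.withDensity fun x => ENNReal.ofReal (hstar x)) σ).toReal
          - (OTeps 0 (μ.withDensity fun x => ENNReal.ofReal (hstar x)) σ).toReal ≤
        C * ε * Real.log (1 / ε) →
      Real.sqrt (∫ x, (heps x - hstar x) ^ 2 ∂μ) ≤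
        Real.sqrt (2 * f ^ 2 / g * (C * ε * Real.log (1 / ε))) := by
  obtain ⟨K, hK, hσK⟩ := hσ
  have hμΩ : μ Ωᶜ = 0 := by
    rw [hμ, Measure.smul_apply, Measure.restrict_apply hΩcpt.measurableSet.compl,
      Set.compl_inter_self, measure_empty, smul_zero]
  have : IsFiniteMeasure μ := ⟨by
    rw [hμ, Measure.smul_apply, Measure.restrict_apply_univ, smul_eq_mul]
    exact (ENNReal.inv_mul_le_one _).trans_lt ENNReal.one_lt_top⟩
  have hfin := OTeps_withDensity_ne_top hΩcpt.isBounded hμΩ hK.isBounded hσK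
  have key := mul_integral_sub_sq_le_of_isMinOn
    (G := fun h => (OTeps ε (μ.withDensity fun x => ENNReal.ofReal (h x)) σ).toReal)
    (convexOn_toReal_OTeps_zero_withDensity hμΩ σ fun _ => hfin 0) (fun _ hD => hD.1)
    (g / (2 * f ^ 2)) hstarD hepsD (isMinOn_iff.mpr hstarMin) (isMinOn_iff.mpr hepsMin)
    (ENNReal.toReal_mono (hfin ε hepsD) (OTeps_zero_le ε _ σ))
  have hbound : ∫ x, (heps x - hstar x) ^ 2 ∂μ ≤ 2 * f ^ 2 / g *
      ((OTeps ε (μ.withDensity fun x => ENNReal.ofReal (hstar x)) σ).toReal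
        - (OTeps 0 (μ.withDensity fun x => ENNReal.ofReal (hstar x)) σ).toReal) := by
    calc ∫ x, (heps x - hstar x) ^ 2 ∂μ
        = 2 * f ^ 2 / g * (g / (2 * f ^ 2) * ∫ x, (heps x - hstar x) ^ 2 ∂μ) := by
          field_simp
      _ ≤ _ := by gcongr
  exact ⟨hbound, fun C hC => Real.sqrt_le_sqrt (hbound.trans (by gcongr))⟩

/-- Let `h*` be the unique minimizer of `E_σ = E_{σ,0}` over
probability densities on `Ω`, and for `ε > 0` let `h_ε` minimize `E_{σ,ε}`.  Then
`‖h_ε − h*‖²_{L²(μ)} ≤ (2f²/g)·(OT_ε(h*μ,σ) − OT(h*μ,σ))`.  In particular, if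
`OT_ε(h*μ,σ) − OT(h*μ,σ) ≤ C·ε·log(1/ε)`, then
`‖h_ε − h*‖_{L²(μ)} ≤ √((2f²/g)·C·ε·log(1/ε))`. -/
theorem stmt_14
    (Ω : Set (EuclideanSpace ℝ (Fin 2)))
    (hΩcpt : IsCompact Ω) (hΩconv : Convex ℝ Ω) (hΩint : (interior Ω).Nonempty)
    (μ : Measure (EuclideanSpace ℝ (Fin 2)))
    (hμ : μ = (volume Ω)⁻¹ • volume.restrict Ω)
    (f g : ℝ) (hf : 0 < f) (hg : 0 < g)
    (σ : Measure (EuclideanSpace ℝ (Fin 2))) [IsProbabilityMeasure σ]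
    (hσ : ∃ K, IsCompact K ∧ σ Kᶜ = 0)
    (hstar : EuclideanSpace ℝ (Fin 2) → ℝ) (hstarD : IsDensity Ω μ hstar)
    (hstarMin : ∀ h, IsDensity Ω μ h → Ese μ f g 0 σ hstar ≤ Ese μ f g 0 σ h)
    (ε : ℝ) (hε : 0 < ε)
    (heps : EuclideanSpace ℝ (Fin 2) → ℝ) (hepsD : IsDensity Ω μ heps)
    (hepsMin : ∀ h, IsDensity Ω μ h → Ese μ f g ε σ heps ≤ Ese μ f g ε σ h) :
    (∫ x, (heps x - hstar x) ^ 2 ∂μ) ≤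
      2 * f ^ 2 / g *
        ((OTeps ε (μ.withDensity fun x => ENNReal.ofReal (hstar x)) σ).toReal
          - (OTeps 0 (μ.withDensity fun x => ENNReal.ofReal (hstar x)) σ).toReal) ∧
    ∀ C : ℝ,
      (OTeps ε (μ.withDensity fun x => ENNReal.ofReal (hstar x)) σ).toReal
          - (OTeps 0 (μ.withDensity fun x => ENNReal.ofReal (hstar x)) σ).toReal ≤
        C * ε * Real.log (1 / ε) →
      Real.sqrt (∫ x, (heps x - hstar x) ^ 2 ∂μ) ≤
        Real.sqrt (2 * f ^ 2 / g * (C * ε * Real.log (1 / ε))) :=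
  stmt_14_general Ω hΩcpt μ hμ f g hf hg σ hσ hstar hstarD hstarMin ε heps hepsD hepsMin
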